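/- arXiv:2605.31587 — 4 statements merged into one kernel-verified Lean document; each statement's English description precedes it below -/
import Mathlib

section
/- Let n ≥ 1 and let C : ℝ → Matrix (Fin n) ℝ take symmetric values and be differentiable at t₀ with derivative Ċ(t₀). Set λ(t) := inf{ v·C(t)v : v ∈ ℝⁿ, ‖v‖ = 1 } (the smallest eigenvalue of C(t)), let E be the eigenspace of C(t₀) for the eigenvalue λ(t₀), and set τ := min{ e·Ċ(t₀)e : e ∈ E, ‖e‖ = 1 }. Then liminf_{h→0⁺} (λ(t₀+h) − λ(t₀))/h ≥ τ. -/
/-!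
Write `λ(M)` for the minimum of `v ⬝ᵥ M v` over the unit sphere and
`D_h = h⁻¹ (C(t₀ + h) - C(t₀))`. If `e₀` is a minimiser for `C(t₀)` and `v_h` one for
`C(t₀ + h)`, then `v_h ⬝ᵥ D_h v_h ≤ (λ(t₀ + h) - λ(t₀)) / h ≤ e₀ ⬝ᵥ D_h e₀`. The right inequality
bounds the quotients from above, so their `liminf` is not a junk value. For the left one, suppose
the quotients are frequently below `b` and let `e` be the limit of the `v_h` along an ultrafilter
on which they are: `e` minimises `v ⬝ᵥ C(t₀) v`, hence, `C(t₀)` being symmetric, is a unit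
eigenvector for `λ(t₀)`, and `τ ≤ e ⬝ᵥ Ċ(t₀) e ≤ b`.
-/

open Matrix Filter

/-- The Euclidean norm of a vector in `ℝⁿ`. -/
noncomputable def euclNorm {n : ℕ} (v : Fin n → ℝ) : ℝ := Real.sqrt (∑ i, v i ^ 2)

open Topology

section UnitSphere

variable {ι : Type*} [Fintype ι]

def unitSphere (ι : Type*) [Fintype ι] : Set (ι → ℝ) := {v | v ⬝ᵥ v = 1}

theorem isCompact_unitSphere : IsCompact (unitSphere ι) := by
  refine Metric.isCompact_of_isClosed_isBounded
    (isClosed_eq (continuous_id.dotProduct continuous_id) continuous_const)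
    ((Metric.isBounded_iff_subset_closedBall 0).2 ⟨1, fun v hv ↦ ?_⟩)
  rw [mem_closedBall_zero_iff, pi_norm_le_iff_of_nonneg zero_le_one]
  intro i
  rw [Real.norm_eq_abs, ← sq_le_one_iff_abs_le_one, ← hv.out, dotProduct, sq]
  exact Finset.single_le_sum (fun j _ ↦ mul_self_nonneg (v j)) (Finset.mem_univ i)

theorem unitSphere_nonempty [Nonempty ι] : (unitSphere ι).Nonempty := by
  classical
  obtain ⟨i⟩ := ‹Nonempty ι›
  exact ⟨Pi.single i 1, by simp [unitSphere]⟩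

theorem inv_sqrt_smul_mem_unitSphere {x : ι → ℝ} (hx : x ≠ 0) :
    (√(x ⬝ᵥ x))⁻¹ • x ∈ unitSphere ι := by
  have hpos : 0 < x ⬝ᵥ x := by simpa using dotProduct_self_star_pos_iff.2 hx
  show _ ⬝ᵥ _ = _
  rw [smul_dotProduct, dotProduct_smul, smul_eq_mul, smul_eq_mul, ← mul_assoc, ← mul_inv,
    Real.mul_self_sqrt hpos.le, inv_mul_cancel₀ hpos.ne']

theorem Filter.Tendsto.dotProduct_mulVec {α : Type*} {l : Filter α} {A : α → Matrix ι ι ℝ}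
    {A₀ : Matrix ι ι ℝ} {v : α → ι → ℝ} {e : ι → ℝ} (hA : Tendsto A l (𝓝 A₀))
    (hv : Tendsto v l (𝓝 e)) : Tendsto (fun a ↦ v a ⬝ᵥ A a *ᵥ v a) l (𝓝 (e ⬝ᵥ A₀ *ᵥ e)) :=
  ((continuous_snd.dotProduct (continuous_fst.matrix_mulVec continuous_snd)).tendsto (A₀, e)).comp
    (hA.prodMk_nhds hv)

theorem exists_isMinOn_unitSphere [Nonempty ι] (M : Matrix ι ι ℝ) :
    ∃ v ∈ unitSphere ι, IsMinOn (fun w ↦ w ⬝ᵥ M *ᵥ w) (unitSphere ι) v :=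
  isCompact_unitSphere.exists_isMinOn unitSphere_nonempty
    (continuous_id.dotProduct (continuous_const.matrix_mulVec continuous_id)).continuousOn

theorem isMinOn_of_tendsto {α : Type*} {l : Filter α} [l.NeBot] {A : α → Matrix ι ι ℝ}
    {A₀ : Matrix ι ι ℝ} {v : α → ι → ℝ} {e : ι → ℝ} {S : Set (ι → ℝ)}
    (hA : Tendsto A l (𝓝 A₀)) (hv : Tendsto v l (𝓝 e))
    (hmin : ∀ᶠ a in l, IsMinOn (fun w ↦ w ⬝ᵥ A a *ᵥ w) S (v a)) :
    IsMinOn (fun w ↦ w ⬝ᵥ A₀ *ᵥ w) S e := fun _ hw ↦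
  le_of_tendsto_of_tendsto (hA.dotProduct_mulVec hv) (hA.dotProduct_mulVec tendsto_const_nhds)
    (hmin.mono fun _ ha ↦ ha hw)

theorem IsMinOn.mul_dotProduct_self_le {M : Matrix ι ι ℝ} {e : ι → ℝ}
    (hmin : IsMinOn (fun w ↦ w ⬝ᵥ M *ᵥ w) (unitSphere ι) e) (x : ι → ℝ) :
    (e ⬝ᵥ M *ᵥ e) * (x ⬝ᵥ x) ≤ x ⬝ᵥ M *ᵥ x := by
  rcases eq_or_ne x 0 with rfl | hx
  · simp
  have hpos : 0 < x ⬝ᵥ x := by simpa using dotProduct_self_star_pos_iff.2 hx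
  have h := isMinOn_iff.1 hmin _ (inv_sqrt_smul_mem_unitSphere hx)
  simp only [mulVec_smul, smul_dotProduct, dotProduct_smul, smul_eq_mul, ← mul_assoc, ← mul_inv,
    Real.mul_self_sqrt hpos.le] at h
  rwa [le_inv_mul_iff₀ hpos, mul_comm] at h

/-- Minimising the quadratic form makes `M - m • 1` positive semidefinite with `e` in its
null cone, hence in its kernel. -/
theorem IsMinOn.mulVec_eq_smul {M : Matrix ι ι ℝ} (hM : M.IsSymm) {e : ι → ℝ}
    (he : e ∈ unitSphere ι) (hmin : IsMinOn (fun w ↦ w ⬝ᵥ M *ᵥ w) (unitSphere ι) e) :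
    M *ᵥ e = (e ⬝ᵥ M *ᵥ e) • e := by
  classical
  set m := e ⬝ᵥ M *ᵥ e
  have hpsd : (M - m • 1).PosSemidef := by
    refine .of_dotProduct_mulVec_nonneg ?_ fun x ↦ ?_
    · exact isHermitian_iff_isSymm.2 (hM.sub (isSymm_one.smul m))
    · simpa [sub_mulVec, smul_mulVec, one_mulVec] using hmin.mul_dotProduct_self_le x
  have hker := (hpsd.dotProduct_mulVec_zero_iff e).1 <| by
    simp [sub_mulVec, smul_mulVec, one_mulVec, he.out, m]
  rwa [sub_mulVec, smul_mulVec, one_mulVec, sub_eq_zero] at hker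

end UnitSphere

section RayleighMin

variable {n : ℕ}

theorem euclNorm_eq_one_iff {v : Fin n → ℝ} : euclNorm v = 1 ↔ v ∈ unitSphere (Fin n) := by
  simp [euclNorm, unitSphere, dotProduct, sq]

noncomputable def rayleighMin (M : Matrix (Fin n) (Fin n) ℝ) : ℝ :=
  sInf {x | ∃ v : Fin n → ℝ, euclNorm v = 1 ∧ x = v ⬝ᵥ M.mulVec v}

theorem bddBelow_rayleigh (M : Matrix (Fin n) (Fin n) ℝ) :
    BddBelow {x | ∃ v : Fin n → ℝ, euclNorm v = 1 ∧ x = v ⬝ᵥ M.mulVec v} :=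
  (isCompact_unitSphere.bddBelow_image
    (continuous_id.dotProduct (continuous_const.matrix_mulVec continuous_id)).continuousOn).mono
    (by rintro _ ⟨v, hv, rfl⟩; exact ⟨v, euclNorm_eq_one_iff.1 hv, rfl⟩)

theorem rayleighMin_le (M : Matrix (Fin n) (Fin n) ℝ) {v : Fin n → ℝ}
    (hv : v ∈ unitSphere (Fin n)) : rayleighMin M ≤ v ⬝ᵥ M *ᵥ v :=
  csInf_le (bddBelow_rayleigh M) ⟨v, euclNorm_eq_one_iff.2 hv, rfl⟩

theorem IsMinOn.rayleighMin_eq {M : Matrix (Fin n) (Fin n) ℝ} {v : Fin n → ℝ}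
    (hv : v ∈ unitSphere (Fin n)) (hmin : IsMinOn (fun w ↦ w ⬝ᵥ M *ᵥ w) (unitSphere (Fin n)) v) :
    rayleighMin M = v ⬝ᵥ M *ᵥ v :=
  IsLeast.csInf_eq ⟨⟨v, euclNorm_eq_one_iff.2 hv, rfl⟩,
    by rintro _ ⟨w, hw, rfl⟩; exact hmin (euclNorm_eq_one_iff.1 hw)⟩

theorem slope_rayleighMin_le {A B : Matrix (Fin n) (Fin n) ℝ} {h : ℝ} (hh : 0 < h)
    {e : Fin n → ℝ} (he : e ∈ unitSphere (Fin n))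
    (hmin : IsMinOn (fun w ↦ w ⬝ᵥ B *ᵥ w) (unitSphere (Fin n)) e) :
    (rayleighMin A - rayleighMin B) / h ≤ e ⬝ᵥ (h⁻¹ • (A - B)) *ᵥ e := by
  rw [smul_mulVec, dotProduct_smul, smul_eq_mul, div_eq_inv_mul, sub_mulVec, dotProduct_sub,
    hmin.rayleighMin_eq he]
  exact mul_le_mul_of_nonneg_left (sub_le_sub_right (rayleighMin_le A he) _) (inv_nonneg.2 hh.le)

theorem le_slope_rayleighMin {A B : Matrix (Fin n) (Fin n) ℝ} {h : ℝ} (hh : 0 < h)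
    {v : Fin n → ℝ} (hv : v ∈ unitSphere (Fin n))
    (hmin : IsMinOn (fun w ↦ w ⬝ᵥ A *ᵥ w) (unitSphere (Fin n)) v) :
    v ⬝ᵥ (h⁻¹ • (A - B)) *ᵥ v ≤ (rayleighMin A - rayleighMin B) / h := by
  rw [smul_mulVec, dotProduct_smul, smul_eq_mul, div_eq_inv_mul, sub_mulVec, dotProduct_sub,
    hmin.rayleighMin_eq hv]
  exact mul_le_mul_of_nonneg_left (sub_le_sub_left (rayleighMin_le B hv) _) (inv_nonneg.2 hh.le)

end RayleighMin

section Derivative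

theorem tendsto_of_tendsto_inv_smul_sub {M : Type*} [AddCommGroup M] [Module ℝ M]
    [TopologicalSpace M] [IsTopologicalAddGroup M] [ContinuousSMul ℝ M] {A : ℝ → M} {A₀ A' : M}
    (hD : Tendsto (fun h ↦ h⁻¹ • (A h - A₀)) (𝓝[>] 0) (𝓝 A')) :
    Tendsto A (𝓝[>] 0) (𝓝 A₀) := by
  have h := (tendsto_const_nhds (x := A₀)).add
    ((tendsto_id.mono_left nhdsWithin_le_nhds).smul hD)
  rw [zero_smul, add_zero] at h
  refine h.congr' (eventually_mem_nhdsWithin.mono fun h (hh : 0 < h) ↦ ?_)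
  simp [smul_inv_smul₀ hh.ne']

theorem tendsto_inv_smul_sub_of_hasDerivAt {m n : Type*} {C : ℝ → Matrix m n ℝ}
    {C' : Matrix m n ℝ} {t₀ : ℝ}
    (hderiv : ∀ i j, HasDerivAt (fun t ↦ C t i j) (C' i j) t₀) :
    Tendsto (fun h ↦ h⁻¹ • (C (t₀ + h) - C t₀)) (𝓝[≠] 0) (𝓝 C') :=
  tendsto_pi_nhds.2 fun i ↦ tendsto_pi_nhds.2 fun j ↦ by
    simpa using hasDerivAt_iff_tendsto_slope_zero.1 (hderiv i j)

variable {n : ℕ} [Nonempty (Fin n)] {A : ℝ → Matrix (Fin n) (Fin n) ℝ}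
  {A₀ A' : Matrix (Fin n) (Fin n) ℝ}

theorem le_of_frequently_slope_rayleighMin_lt (hA₀ : A₀.IsSymm)
    (hD : Tendsto (fun h ↦ h⁻¹ • (A h - A₀)) (𝓝[>] 0) (𝓝 A')) {b : ℝ}
    (hb : ∃ᶠ h in 𝓝[>] 0, (rayleighMin (A h) - rayleighMin A₀) / h < b) :
    sInf {x | ∃ e : Fin n → ℝ, A₀.mulVec e = rayleighMin A₀ • e ∧
      euclNorm e = 1 ∧ x = e ⬝ᵥ A'.mulVec e} ≤ b := by
  choose v hv hmin using fun h ↦ exists_isMinOn_unitSphere (A h)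
  have := frequently_iff_neBot.1 hb
  set U := Ultrafilter.of (𝓝[>] 0 ⊓ 𝓟 {h | (rayleighMin (A h) - rayleighMin A₀) / h < b})
  have hUl : (U : Filter ℝ) ≤ 𝓝[>] 0 := (Ultrafilter.of_le _).trans inf_le_left
  have hUb : ∀ᶠ h in U, (rayleighMin (A h) - rayleighMin A₀) / h < b :=
    (Ultrafilter.of_le _).trans inf_le_right (mem_principal_self _)
  obtain ⟨e, he, hve⟩ := isCompact_unitSphere.ultrafilter_le_nhds (U.map v)
    (tendsto_principal.2 (.of_forall hv))
  have hmin_e : IsMinOn (fun w ↦ w ⬝ᵥ A₀ *ᵥ w) (unitSphere (Fin n)) e :=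
    isMinOn_of_tendsto ((tendsto_of_tendsto_inv_smul_sub hD).mono_left hUl) hve
      (Eventually.of_forall hmin)
  refine (csInf_le (a := e ⬝ᵥ A' *ᵥ e) ⟨rayleighMin A', ?_⟩ ?_).trans ?_
  · rintro _ ⟨w, -, hw, rfl⟩
    exact rayleighMin_le A' (euclNorm_eq_one_iff.1 hw)
  · refine ⟨e, ?_, euclNorm_eq_one_iff.2 he, rfl⟩
    rw [hmin_e.rayleighMin_eq he]
    exact hmin_e.mulVec_eq_smul hA₀ he
  · exact le_of_tendsto ((hD.mono_left hUl).dotProduct_mulVec hve) <|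
      (hUb.and (hUl self_mem_nhdsWithin)).mono fun h ⟨hlt, hpos⟩ ↦
        (le_slope_rayleighMin hpos (hv h) (hmin h)).trans hlt.le

theorem le_liminf_slope_rayleighMin (hA₀ : A₀.IsSymm)
    (hD : Tendsto (fun h ↦ h⁻¹ • (A h - A₀)) (𝓝[>] 0) (𝓝 A')) :
    sInf {x | ∃ e : Fin n → ℝ, A₀.mulVec e = rayleighMin A₀ • e ∧
      euclNorm e = 1 ∧ x = e ⬝ᵥ A'.mulVec e} ≤
      liminf (fun h ↦ (rayleighMin (A h) - rayleighMin A₀) / h) (𝓝[>] 0) := by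
  obtain ⟨e₀, he₀, hmin₀⟩ := exists_isMinOn_unitSphere A₀
  have hbdd :
      IsBoundedUnder (· ≤ ·) (𝓝[>] 0) fun h ↦ (rayleighMin (A h) - rayleighMin A₀) / h :=
    (hD.dotProduct_mulVec tendsto_const_nhds).isBoundedUnder_le.mono_le <|
      eventually_mem_nhdsWithin.mono fun _ hh ↦ slope_rayleighMin_le hh he₀ hmin₀
  refine le_of_forall_lt_imp_le_of_dense fun b hb ↦ le_liminf_of_le hbdd.isCoboundedUnder_ge ?_
  by_contra hfreq
  exact hb.not_ge (le_of_frequently_slope_rayleighMin_lt hA₀ hD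
    (by simpa only [not_eventually, not_le] using hfreq))

end Derivative

theorem stmt0 (n : ℕ) (hn : 1 ≤ n) (C : ℝ → Matrix (Fin n) (Fin n) ℝ)
    (t₀ : ℝ) (C' : Matrix (Fin n) (Fin n) ℝ)
    (hsymm : ∀ t, (C t).IsSymm)
    (hderiv : ∀ i j, HasDerivAt (fun t => C t i j) (C' i j) t₀)
    (lam : ℝ → ℝ)
    (hlam : ∀ t, lam t =
      sInf {x | ∃ v : Fin n → ℝ, euclNorm v = 1 ∧ x = v ⬝ᵥ (C t).mulVec v})
    (τ : ℝ)
    (hτ : τ = sInf {x | ∃ e : Fin n → ℝ, (C t₀).mulVec e = lam t₀ • e ∧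
      euclNorm e = 1 ∧ x = e ⬝ᵥ C'.mulVec e}) :
    τ ≤ liminf (fun h : ℝ => (lam (t₀ + h) - lam t₀) / h) (nhdsWithin 0 (Set.Ioi 0)) := by
  have : Nonempty (Fin n) := Fin.pos_iff_nonempty.1 hn
  obtain rfl : lam = fun t ↦ rayleighMin (C t) := funext hlam
  subst hτ
  exact le_liminf_slope_rayleighMin (hsymm t₀)
    ((tendsto_inv_smul_sub_of_hasDerivAt hderiv).mono_left (nhdsGT_le_nhdsNE 0))
end

section
/- Let n ≥ 1 and let C : ℝ → Matrix (Fin n) ℝ take symmetric values and be differentiable at t₀ with derivative Ċ(t₀). Set λ(t) := inf{ v·C(t)v : v ∈ ℝⁿ, ‖v‖ = 1 } (the smallest eigenvalue of C(t)), let E be the eigenspace of C(t₀) for the eigenvalue λ(t₀), and set τ := min{ e·Ċ(t₀)e : e ∈ E, ‖e‖ = 1 }. Then the one-sided limit lim_{h→0⁺} (λ(t₀+h) − λ(t₀))/h exists and equals τ; i.e., the right Dini derivative of λ at t₀ equals the minimum over unit vectors e in E of e·Ċ(t₀)e. -/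
/-!
The map `h ↦ λ(t₀ + h)` is a minimum, over the compact unit sphere `S`, of quadratic forms
`q_h(v) = v ⬝ᵥ C(t₀ + h) v` which satisfy `q_h = q_0 + h q' + o(h)` uniformly on `S`. This is the
setting of Danskin's theorem: testing with a minimizer `e` of `q_0` gives
`λ(t₀ + h) ≤ λ(t₀) + h q'(e) + o(h)`; conversely, directions with `q'(v) ≤ τ - ε` form a compact
set containing no minimizer of `q_0`, so `q_0 ≥ λ(t₀) + δ` there and those directions do not
compete for small `h`, which gives `λ(t₀ + h) ≥ λ(t₀) + h(τ - ε) + o(h)`. Finally, for a symmetric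
matrix the minimizers of `q_0` on `S` are exactly the unit eigenvectors for `λ(t₀)`, because
`C(t₀) - λ(t₀) • 1` is positive semidefinite.
-/

open Matrix Filter

open Topology Set Finset

theorem IsGLB.eq_of_isMinOn {X : Type*} {K : Set X} {f : X → ℝ} {m₀ : ℝ}
    (hm₀ : IsGLB (f '' K) m₀) {v : X} (hv : v ∈ K) (hmin : IsMinOn f K v) : f v = m₀ :=
  (IsLeast.isGLB ⟨mem_image_of_mem f hv, forall_mem_image.2 hmin⟩).unique hm₀

theorem eventually_le_add_mul_of_isGLB {X : Type*} {K : Set X} {f g : X → ℝ}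
    {F : ℝ → X → ℝ} {m : ℝ → ℝ} {m₀ τ : ℝ}
    (hF : ∀ ε > 0, ∀ᶠ h in 𝓝[>] 0, ∀ v ∈ K, |F h v - f v - h * g v| ≤ ε * h)
    (hm : ∀ h, IsGLB (F h '' K) (m h)) (hm₀ : IsGLB (f '' K) m₀)
    (hτ : IsGLB (g '' {v ∈ K | IsMinOn f K v}) τ) {ε : ℝ} (hε : 0 < ε) :
    ∀ᶠ h in 𝓝[>] 0, m h ≤ m₀ + h * (τ + ε) := by
  obtain ⟨_, ⟨e, ⟨heK, hemin⟩, rfl⟩, -, hge⟩ :=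
    hτ.exists_between (lt_add_of_pos_right τ (half_pos hε))
  have hfe := hm₀.eq_of_isMinOn heK hemin
  filter_upwards [hF _ (half_pos hε), self_mem_nhdsWithin] with h hh (hpos : 0 < h)
  have := (hm h).1 (mem_image_of_mem _ heK)
  nlinarith [(abs_le.1 (hh e heK)).2]

section Compact

variable {X : Type*} [TopologicalSpace X] {K : Set X} {f g : X → ℝ} {F : ℝ → X → ℝ}
  {m : ℝ → ℝ} {m₀ τ : ℝ}

theorem IsCompact.exists_pos_add_le_of_le (hK : IsCompact K) (hf : Continuous f)
    (hg : Continuous g) (hm₀ : IsGLB (f '' K) m₀) {c : ℝ}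
    (hc : ∀ v ∈ K, IsMinOn f K v → c < g v) :
    ∃ δ > 0, ∀ v ∈ K, g v ≤ c → m₀ + δ ≤ f v := by
  obtain hL | hL := (K ∩ {v | g v ≤ c}).eq_empty_or_nonempty
  · exact ⟨1, one_pos, fun v hv hgv => absurd (hL ▸ ⟨hv, hgv⟩ : v ∈ (∅ : Set X)) id⟩
  obtain ⟨w, ⟨hwK, hwc⟩, hwmin⟩ :=
    (hK.inter_right (isClosed_le hg continuous_const)).exists_isMinOn hL hf.continuousOn
  have hlt : m₀ < f w := by
    refine (hm₀.1 (mem_image_of_mem f hwK)).lt_of_ne fun heq => ?_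
    have : IsMinOn f K w := fun v hv => heq ▸ hm₀.1 (mem_image_of_mem f hv)
    exact (hc w hwK this).not_ge hwc
  refine ⟨f w - m₀, sub_pos.2 hlt, fun v hv hgv => ?_⟩
  linarith [isMinOn_iff.1 hwmin v ⟨hv, hgv⟩]

theorem IsCompact.eventually_add_mul_le_of_isGLB (hK : IsCompact K) (hf : Continuous f)
    (hg : Continuous g)
    (hF : ∀ ε > 0, ∀ᶠ h in 𝓝[>] 0, ∀ v ∈ K, |F h v - f v - h * g v| ≤ ε * h)
    (hm : ∀ h, IsGLB (F h '' K) (m h)) (hm₀ : IsGLB (f '' K) m₀)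
    (hτ : IsGLB (g '' {v ∈ K | IsMinOn f K v}) τ) {ε : ℝ} (hε : 0 < ε) :
    ∀ᶠ h in 𝓝[>] 0, m₀ + h * (τ - ε) ≤ m h := by
  obtain ⟨δ, hδ, hsep⟩ := hK.exists_pos_add_le_of_le hf hg hm₀ (c := τ - ε / 2)
    fun v hv hmin => by linarith [hτ.1 (mem_image_of_mem g ⟨hv, hmin⟩), half_pos hε]
  obtain ⟨b, hb⟩ := hK.bddBelow_image hg.continuousOn
  have hsmall : ∀ᶠ h in 𝓝[>] (0 : ℝ), h * (τ - b) < δ :=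
    nhdsWithin_le_nhds (((continuous_mul_const (τ - b)).tendsto' 0 0 (zero_mul _)).eventually
      (gt_mem_nhds hδ))
  filter_upwards [hF _ (half_pos hε), hsmall, self_mem_nhdsWithin] with h hh hhδ (hpos : 0 < h)
  refine (hm h).2 (forall_mem_image.2 fun v hv => ?_)
  have hFv := (abs_le.1 (hh v hv)).1
  have hbv := hb (mem_image_of_mem g hv)
  by_cases hgv : g v ≤ τ - ε / 2
  · nlinarith [hsep v hv hgv]
  · nlinarith [hm₀.1 (mem_image_of_mem f hv)]

/-- Danskin's theorem for the right derivative of a minimum over a compact set. -/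
theorem IsCompact.tendsto_slope_of_isGLB (hK : IsCompact K) (hf : Continuous f)
    (hg : Continuous g)
    (hF : ∀ ε > 0, ∀ᶠ h in 𝓝[>] 0, ∀ v ∈ K, |F h v - f v - h * g v| ≤ ε * h)
    (hm : ∀ h, IsGLB (F h '' K) (m h)) (hm₀ : IsGLB (f '' K) m₀)
    (hτ : IsGLB (g '' {v ∈ K | IsMinOn f K v}) τ) :
    Tendsto (fun h => (m h - m₀) / h) (𝓝[>] 0) (𝓝 τ) := by
  refine tendsto_order.2 ⟨fun a ha => ?_, fun a ha => ?_⟩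
  · filter_upwards [hK.eventually_add_mul_le_of_isGLB hf hg hF hm hm₀ hτ
      (half_pos (sub_pos.2 ha)), self_mem_nhdsWithin] with h hh (hpos : 0 < h)
    rw [lt_div_iff₀ hpos]
    nlinarith
  · filter_upwards [eventually_le_add_mul_of_isGLB hF hm hm₀ hτ (half_pos (sub_pos.2 ha)),
      self_mem_nhdsWithin] with h hh (hpos : 0 < h)
    rw [div_lt_iff₀ hpos]
    nlinarith

end Compact

theorem Matrix.IsSymm.mulVec_eq_smul_of_dotProduct_mulVec_eq {ι : Type*} [Fintype ι]
    [DecidableEq ι] {M : Matrix ι ι ℝ} (hM : M.IsSymm) {μ : ℝ}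
    (hle : ∀ x, μ * (x ⬝ᵥ x) ≤ x ⬝ᵥ M *ᵥ x) {x : ι → ℝ} (hx : x ⬝ᵥ M *ᵥ x = μ * (x ⬝ᵥ x)) :
    M *ᵥ x = μ • x := by
  have hexp : ∀ y : ι → ℝ, star y ⬝ᵥ (M - μ • 1) *ᵥ y = y ⬝ᵥ M *ᵥ y - μ * (y ⬝ᵥ y) := by
    intro y
    simp [sub_mulVec, dotProduct_sub, smul_mulVec]
  have hpsd : (M - μ • 1).PosSemidef :=
    .of_dotProduct_mulVec_nonneg (isHermitian_iff_isSymm.2 (hM.sub (isSymm_one.smul μ)))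
      fun y => by rw [hexp]; linarith [hle y]
  have := (hpsd.dotProduct_mulVec_zero_iff x).1 (by rw [hexp]; linarith)
  rwa [sub_mulVec, smul_mulVec, one_mulVec, sub_eq_zero] at this

theorem abs_dotProduct_mulVec_le_sum_abs {ι : Type*} [Fintype ι] (M : Matrix ι ι ℝ)
    {v : ι → ℝ} (hv : ∀ i, |v i| ≤ 1) : |v ⬝ᵥ M *ᵥ v| ≤ ∑ i, ∑ j, |M i j| := by
  calc |v ⬝ᵥ M *ᵥ v| = |∑ i, ∑ j, v i * M i j * v j| := by
        simp [dotProduct, mulVec, Finset.mul_sum, mul_assoc]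
    _ ≤ ∑ i, ∑ j, |v i * M i j * v j| :=
        (abs_sum_le_sum_abs _ _).trans (sum_le_sum fun i _ => abs_sum_le_sum_abs _ _)
    _ ≤ ∑ i, ∑ j, |M i j| := by
        refine sum_le_sum fun i _ => sum_le_sum fun j _ => ?_
        rw [abs_mul, abs_mul]
        exact (mul_le_of_le_one_right (by positivity) (hv j)).trans
          (mul_le_of_le_one_left (abs_nonneg _) (hv i))

section euclNorm

variable {n : ℕ}

theorem euclNorm_eq_norm (v : Fin n → ℝ) : euclNorm v = ‖WithLp.toLp 2 v‖ := by
  rw [EuclideanSpace.norm_eq]; simp [euclNorm, sq_abs]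

theorem sq_euclNorm (v : Fin n → ℝ) : euclNorm v ^ 2 = v ⬝ᵥ v := by
  rw [euclNorm, Real.sq_sqrt (by positivity)]; simp [dotProduct, sq]

theorem euclNorm_smul (c : ℝ) (v : Fin n → ℝ) : euclNorm (c • v) = |c| * euclNorm v := by
  simp [euclNorm_eq_norm, norm_smul]

theorem abs_le_one_of_euclNorm_eq_one {v : Fin n → ℝ} (hv : euclNorm v = 1) (i : Fin n) :
    |v i| ≤ 1 := by
  rw [euclNorm_eq_norm] at hv
  simpa [hv] using PiLp.norm_apply_le (WithLp.toLp 2 v) i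

theorem isCompact_euclNorm_eq_one : IsCompact {v : Fin n → ℝ | euclNorm v = 1} := by
  convert (EuclideanSpace.equiv (Fin n) ℝ).symm.toHomeomorph.isCompact_preimage.2
    (isCompact_sphere 0 1)
  ext v; simp [euclNorm_eq_norm]

theorem nonempty_euclNorm_eq_one (hn : 0 < n) : {v : Fin n → ℝ | euclNorm v = 1}.Nonempty :=
  ⟨Pi.single ⟨0, hn⟩ 1, by simp [euclNorm_eq_norm]⟩

theorem mul_dotProduct_self_le_of_forall_euclNorm_eq_one {M : Matrix (Fin n) (Fin n) ℝ}
    {μ : ℝ} (hμ : ∀ u, euclNorm u = 1 → μ ≤ u ⬝ᵥ M *ᵥ u) (x : Fin n → ℝ) :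
    μ * (x ⬝ᵥ x) ≤ x ⬝ᵥ M *ᵥ x := by
  obtain rfl | hx := eq_or_ne x 0
  · simp
  have hr : 0 < euclNorm x := by
    rw [euclNorm_eq_norm]; exact norm_pos_iff.2 (by simpa using hx)
  have hu := hμ ((euclNorm x)⁻¹ • x) (by
    rw [euclNorm_smul, abs_inv, abs_of_pos hr, inv_mul_cancel₀ hr.ne'])
  rw [mulVec_smul, dotProduct_smul, smul_dotProduct, smul_eq_mul, smul_eq_mul] at hu
  rw [← sq_euclNorm]
  have := mul_le_mul_of_nonneg_left hu (sq_nonneg (euclNorm x))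
  field_simp at this
  linarith

theorem isGLB_sInf_dotProduct_mulVec (hn : 0 < n) (M : Matrix (Fin n) (Fin n) ℝ) :
    IsGLB ((fun v => v ⬝ᵥ M *ᵥ v) '' {v | euclNorm v = 1})
      (sInf {x | ∃ v : Fin n → ℝ, euclNorm v = 1 ∧ x = v ⬝ᵥ M *ᵥ v}) := by
  have hset : {x | ∃ v : Fin n → ℝ, euclNorm v = 1 ∧ x = v ⬝ᵥ M *ᵥ v} =
      (fun v => v ⬝ᵥ M *ᵥ v) '' {v | euclNorm v = 1} := by
    ext x; simp [eq_comm]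
  rw [hset]
  exact Real.isGLB_sInf ((nonempty_euclNorm_eq_one hn).image _)
    (isCompact_euclNorm_eq_one.bddBelow_image (by fun_prop))

theorem isMinOn_iff_mulVec_eq_smul {M : Matrix (Fin n) (Fin n) ℝ} (hM : M.IsSymm)
    {μ : ℝ} (hμ : IsGLB ((fun v => v ⬝ᵥ M *ᵥ v) '' {v | euclNorm v = 1}) μ) {v : Fin n → ℝ}
    (hv : euclNorm v = 1) :
    IsMinOn (fun v => v ⬝ᵥ M *ᵥ v) {v | euclNorm v = 1} v ↔ M *ᵥ v = μ • v := by
  have hvv : v ⬝ᵥ v = 1 := by rw [← sq_euclNorm, hv, one_pow]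
  have hle : ∀ u, euclNorm u = 1 → μ ≤ u ⬝ᵥ M *ᵥ u := fun u hu => hμ.1 (mem_image_of_mem _ hu)
  constructor
  · intro hmin
    have hvμ := hμ.eq_of_isMinOn hv hmin
    classical
    exact hM.mulVec_eq_smul_of_dotProduct_mulVec_eq
      (mul_dotProduct_self_le_of_forall_euclNorm_eq_one hle) (by simp only [hvμ, hvv, mul_one])
  · intro heig u hu
    simpa [heig, dotProduct_smul, hvv] using hle u hu

theorem eventually_abs_dotProduct_mulVec_sub_le {C : ℝ → Matrix (Fin n) (Fin n) ℝ}
    {C' : Matrix (Fin n) (Fin n) ℝ} {t₀ : ℝ}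
    (hderiv : ∀ i j, HasDerivAt (fun t => C t i j) (C' i j) t₀) {ε : ℝ} (hε : 0 < ε) :
    ∀ᶠ h in 𝓝[>] 0, ∀ v, euclNorm v = 1 →
      |v ⬝ᵥ C (t₀ + h) *ᵥ v - v ⬝ᵥ C t₀ *ᵥ v - h * (v ⬝ᵥ C' *ᵥ v)| ≤ ε * h := by
  have ho : (fun h => ∑ i, ∑ j, ‖C (t₀ + h) i j - C t₀ i j - h • C' i j‖) =o[𝓝 0]
      fun h => h :=
    Asymptotics.IsLittleO.fun_sum fun i _ => Asymptotics.IsLittleO.fun_sum fun j _ =>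
      (hasDerivAt_iff_isLittleO_nhds_zero.1 (hderiv i j)).norm_left
  filter_upwards [nhdsWithin_le_nhds (ho.def hε), self_mem_nhdsWithin]
    with h hh (hpos : 0 < h) v hv
  have hD : v ⬝ᵥ C (t₀ + h) *ᵥ v - v ⬝ᵥ C t₀ *ᵥ v - h * (v ⬝ᵥ C' *ᵥ v) =
      v ⬝ᵥ (C (t₀ + h) - C t₀ - h • C') *ᵥ v := by
    simp only [sub_mulVec, smul_mulVec, dotProduct_sub, dotProduct_smul, smul_eq_mul]
  rw [hD]
  refine (abs_dotProduct_mulVec_le_sum_abs _ (abs_le_one_of_euclNorm_eq_one hv)).trans ?_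
  rw [Real.norm_of_nonneg (by positivity), Real.norm_of_nonneg hpos.le] at hh
  simpa using hh

end euclNorm

theorem stmt2 (n : ℕ) (hn : 1 ≤ n) (C : ℝ → Matrix (Fin n) (Fin n) ℝ)
    (t₀ : ℝ) (C' : Matrix (Fin n) (Fin n) ℝ)
    (hsymm : ∀ t, (C t).IsSymm)
    (hderiv : ∀ i j, HasDerivAt (fun t => C t i j) (C' i j) t₀)
    (lam : ℝ → ℝ)
    (hlam : ∀ t, lam t =
      sInf {x | ∃ v : Fin n → ℝ, euclNorm v = 1 ∧ x = v ⬝ᵥ (C t).mulVec v})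
    (τ : ℝ)
    (hτ : τ = sInf {x | ∃ e : Fin n → ℝ, (C t₀).mulVec e = lam t₀ • e ∧
      euclNorm e = 1 ∧ x = e ⬝ᵥ C'.mulVec e}) :
    Tendsto (fun h : ℝ => (lam (t₀ + h) - lam t₀) / h) (nhdsWithin 0 (Set.Ioi 0)) (nhds τ) := by
  set S : Set (Fin n → ℝ) := {v | euclNorm v = 1}
  have hS : IsCompact S := isCompact_euclNorm_eq_one
  have hlamGLB (t : ℝ) : IsGLB ((fun v => v ⬝ᵥ C t *ᵥ v) '' S) (lam t) :=
    hlam t ▸ isGLB_sInf_dotProduct_mulVec hn (C t)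
  set A := {v ∈ S | IsMinOn (fun v => v ⬝ᵥ C t₀ *ᵥ v) S v}
  obtain ⟨v₀, hv₀⟩ : A.Nonempty :=
    hS.exists_isMinOn (nonempty_euclNorm_eq_one hn) (by fun_prop)
  have hset : {x | ∃ e : Fin n → ℝ, C t₀ *ᵥ e = lam t₀ • e ∧ euclNorm e = 1 ∧
      x = e ⬝ᵥ C' *ᵥ e} = (fun v => v ⬝ᵥ C' *ᵥ v) '' A := by
    ext x
    have hA := fun e (he : euclNorm e = 1) =>
      isMinOn_iff_mulVec_eq_smul (hsymm t₀) (hlamGLB t₀) he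
    simp only [A, S, Set.mem_image, Set.mem_ofPred_eq]
    exact ⟨fun ⟨e, heig, he, hx⟩ => ⟨e, ⟨he, (hA e he).2 heig⟩, hx.symm⟩,
      fun ⟨e, ⟨he, hmin⟩, hx⟩ => ⟨e, (hA e he).1 hmin, he, hx.symm⟩⟩
  have hτGLB : IsGLB ((fun v => v ⬝ᵥ C' *ᵥ v) '' A) τ := by
    rw [hτ, hset]
    exact Real.isGLB_sInf ⟨_, mem_image_of_mem _ hv₀⟩
      ((hS.bddBelow_image (by fun_prop)).mono (image_mono (sep_subset _ _)))
  exact hS.tendsto_slope_of_isGLB (by fun_prop) (by fun_prop)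
    (fun ε hε => eventually_abs_dotProduct_mulVec_sub_le hderiv hε)
    (fun h => hlamGLB (t₀ + h)) (hlamGLB t₀) hτGLB
end

section
/- Let α ∈ [1/3, 1), let T ∈ (0,∞), let B : [0,T) → ℝ be continuous and nonnegative with ∫₀^T B(s) ds < ∞, let C ≥ 0, and let J : [0,T) → ℝ be differentiable with J(t) > 0 for all t, J(0) = 1, and J'(t) ≥ −B(t) J(t) − C J(t)^{3α} for all t ∈ [0,T). Then there exists c > 0 such that J(t) ≥ c for all t ∈ [0,T). (When α = 1/3 one may take c = exp(−∫₀^T B(s) ds − C T).) -/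
/-!
Below the barrier `exp (-∫₀ᵗ B - C t) ≤ 1` we have `J ≤ 1`, hence `J ^ (3α) ≤ J` because
`3α ≥ 1`, so there the differential inequality becomes linear: `J' ≥ -(B + C) J`. A comparison
argument for `log J` shows that `J` can never cross the barrier, which is bounded below by
`exp (-∫₀ᵀ B - C T)`.
-/

open Set MeasureTheory Real

theorem image_nonpos_of_deriv_right_nonpos_of_pos {f f' : ℝ → ℝ} {a b : ℝ}
    (hf : ContinuousOn f (Icc a b)) (hf' : ∀ x ∈ Ico a b, HasDerivWithinAt f (f' x) (Ici x) x)
    (ha : f a ≤ 0) (hderiv : ∀ x ∈ Ico a b, 0 < f x → f' x ≤ 0) :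
    ∀ x ∈ Icc a b, f x ≤ 0 := by
  intro x hx
  have hx1 : 0 < x - a + 1 := by linarith [hx.1]
  -- the fencing theorem needs a strict inequality at contact points, hence the slanted barriers
  have hslack : ∀ ε > 0, f x ≤ ε * (x - a + 1) := fun ε hε =>
    image_le_of_deriv_right_lt_deriv_boundary hf hf' (B := fun y => ε * (y - a + 1))
      (by simpa using ha.trans hε.le)
      (fun y => by simpa using (((hasDerivAt_id y).sub_const a).add_const 1).const_mul ε)
      (fun y hy hfy => (hderiv y hy (hfy ▸ by nlinarith [hy.1])).trans_lt hε) hx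
  refine le_of_forall_pos_le_add fun ε hε => ?_
  simpa [div_mul_cancel₀ _ hx1.ne'] using hslack (ε / (x - a + 1)) (by positivity)

theorem exp_le_of_mul_le_deriv_of_lt_exp {a b : ℝ} {G G' J J' : ℝ → ℝ}
    (hG : ∀ x ∈ Ico a b, HasDerivWithinAt G (G' x) (Ico a b) x)
    (hJ : ∀ x ∈ Ico a b, HasDerivWithinAt J (J' x) (Ico a b) x)
    (hpos : ∀ x ∈ Ico a b, 0 < J x) (ha : exp (G a) ≤ J a)
    (hJ' : ∀ x ∈ Ico a b, J x < exp (G x) → G' x * J x ≤ J' x) :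
    ∀ x ∈ Ico a b, exp (G x) ≤ J x := by
  intro t ht
  have hsub : Icc a t ⊆ Ico a b := fun y hy => ⟨hy.1, hy.2.trans_lt ht.2⟩
  have hf : ∀ x ∈ Ico a b,
      HasDerivWithinAt (fun y => G y - log (J y)) (G' x - J' x / J x) (Ico a b) x :=
    fun x hx => (hG x hx).sub ((hJ x hx).log (hpos x hx).ne')
  have hnonpos := image_nonpos_of_deriv_right_nonpos_of_pos
    (fun x hx => (hf x (hsub hx)).continuousWithinAt.mono hsub)
    (fun x hx => (hf x (hsub (Ico_subset_Icc_self hx))).mono_of_mem_nhdsWithin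
      (Ico_mem_nhdsGE_of_mem (hsub (Ico_subset_Icc_self hx))))
    (by simpa using (le_log_iff_exp_le (hpos a ⟨le_rfl, ht.1.trans_lt ht.2⟩)).2 ha)
    (fun x hx hfx => by
      have hx' := hsub (Ico_subset_Icc_self hx)
      have hlt : J x < exp (G x) := (log_lt_iff_lt_exp (hpos x hx')).1 (by linarith)
      have := (le_div_iff₀ (hpos x hx')).2 (hJ' x hx' hlt)
      linarith)
    t ⟨ht.1, le_rfl⟩
  exact (le_log_iff_exp_le (hpos t ht)).1 (by linarith)

theorem ContinuousOn.hasDerivWithinAt_integral_Ico {E : Type*} [NormedAddCommGroup E]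
    [NormedSpace ℝ E] [CompleteSpace E] {f : ℝ → E} {a b : ℝ} (hf : ContinuousOn f (Ico a b)) :
    ∀ x ∈ Ico a b, HasDerivWithinAt (fun u => ∫ s in a..u, f s) (f x) (Ico a b) x := by
  intro x hx
  obtain ⟨c, hxc, hcb⟩ := exists_between hx.2
  have hsub : Icc a c ⊆ Ico a b := Icc_subset_Ico_right hcb
  have hmem : Icc a c ∈ nhdsWithin x (Ico a b) :=
    mem_nhdsWithin.2 ⟨Iio c, isOpen_Iio, hxc, fun y hy => ⟨hy.2.1, hy.1.le⟩⟩
  have : Fact (x ∈ Icc a c) := ⟨⟨hx.1, hxc.le⟩⟩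
  exact (intervalIntegral.integral_hasDerivWithinAt_right
    (hf.mono (by rw [uIcc_of_le hx.1]; exact Icc_subset_Ico_right hx.2)).intervalIntegrable
    ((hf.mono hsub).stronglyMeasurableAtFilter_nhdsWithin measurableSet_Icc x)
    ((hf x hx).mono hsub)).mono_of_mem_nhdsWithin hmem

theorem intervalIntegral_le_setIntegral_of_Ioc_subset {f : ℝ → ℝ} {a x : ℝ} {s : Set ℝ}
    (hax : a ≤ x) (hs : Ioc a x ⊆ s) (hsm : MeasurableSet s) (hf : IntegrableOn f s)
    (hnn : ∀ t ∈ s, 0 ≤ f t) : ∫ u in a..x, f u ≤ ∫ u in s, f u := by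
  rw [intervalIntegral.integral_of_le hax]
  exact setIntegral_mono_set hf (ae_restrict_of_forall_mem hsm hnn) hs.eventuallyLE

theorem stmt10_general (α : ℝ) (hα1 : 1 / 3 ≤ α)
    (T : ℝ)
    (B : ℝ → ℝ)
    (hBcont : ContinuousOn B (Set.Ico 0 T)) (hBnn : ∀ t ∈ Set.Ico 0 T, 0 ≤ B t)
    (hBint : MeasureTheory.IntegrableOn B (Set.Ico 0 T))
    (C : ℝ) (hC : 0 ≤ C)
    (J J' : ℝ → ℝ)
    (hpos : ∀ t ∈ Set.Ico 0 T, 0 < J t) (hJ0 : J 0 = 1)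
    (hderiv : ∀ t ∈ Set.Ico 0 T, HasDerivWithinAt J (J' t) (Set.Ico 0 T) t)
    (hineq : ∀ t ∈ Set.Ico 0 T, -B t * J t - C * J t ^ (3 * α) ≤ J' t) :
    ∃ c > 0, (∀ t ∈ Set.Ico 0 T, c ≤ J t) ∧
      (α = 1 / 3 → ∀ t ∈ Set.Ico 0 T,
        Real.exp (-(∫ s in Set.Ico (0:ℝ) T, B s) - C * T) ≤ J t) := by
  set G : ℝ → ℝ := fun x => -(∫ s in (0:ℝ)..x, B s) - C * x
  have hG : ∀ x ∈ Ico 0 T, HasDerivWithinAt G (-B x - C) (Ico 0 T) x := fun x hx =>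
    ((hBcont.hasDerivWithinAt_integral_Ico x hx).neg.sub
      ((hasDerivWithinAt_id x _).const_mul C)).congr_deriv (by ring)
  have hG_nonpos : ∀ x ∈ Ico 0 T, G x ≤ 0 := fun x hx => by
    have hF_nonneg : 0 ≤ ∫ s in (0:ℝ)..x, B s :=
      intervalIntegral.integral_nonneg hx.1 fun u hu => hBnn u ⟨hu.1, hu.2.trans_lt hx.2⟩
    simp only [G]
    linarith [mul_nonneg hC hx.1]
  have hbarrier : ∀ x ∈ Ico 0 T, J x < exp (G x) → (-B x - C) * J x ≤ J' x := by
    intro x hx hlt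
    have hJ1 : J x ≤ 1 := hlt.le.trans (exp_le_one_iff.2 (hG_nonpos x hx))
    have hJpow := rpow_le_self_of_le_one (hpos x hx).le hJ1 (by linarith : (1:ℝ) ≤ 3 * α)
    linarith [hineq x hx, mul_le_mul_of_nonneg_left hJpow hC]
  have habove := exp_le_of_mul_le_deriv_of_lt_exp hG hderiv hpos (by simp [G, hJ0]) hbarrier
  have hlower : ∀ t ∈ Ico 0 T, exp (-(∫ s in Ico (0:ℝ) T, B s) - C * T) ≤ J t := fun t ht => by
    refine (exp_le_exp.2 ?_).trans (habove t ht)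
    have hF_le := intervalIntegral_le_setIntegral_of_Ioc_subset ht.1
      (Ioc_subset_Icc_self.trans (Icc_subset_Ico_right ht.2)) measurableSet_Ico hBint hBnn
    simp only [G]
    linarith [mul_le_mul_of_nonneg_left ht.2.le hC]
  exact ⟨_, exp_pos _, hlower, fun _ => hlower⟩

theorem stmt10 (α : ℝ) (hα1 : 1 / 3 ≤ α) (hα2 : α < 1)
    (T : ℝ) (hT : 0 < T)
    (B : ℝ → ℝ)
    (hBcont : ContinuousOn B (Set.Ico 0 T)) (hBnn : ∀ t ∈ Set.Ico 0 T, 0 ≤ B t)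
    (hBint : MeasureTheory.IntegrableOn B (Set.Ico 0 T))
    (C : ℝ) (hC : 0 ≤ C)
    (J J' : ℝ → ℝ)
    (hpos : ∀ t ∈ Set.Ico 0 T, 0 < J t) (hJ0 : J 0 = 1)
    (hderiv : ∀ t ∈ Set.Ico 0 T, HasDerivWithinAt J (J' t) (Set.Ico 0 T) t)
    (hineq : ∀ t ∈ Set.Ico 0 T, -B t * J t - C * J t ^ (3 * α) ≤ J' t) :
    ∃ c > 0, (∀ t ∈ Set.Ico 0 T, c ≤ J t) ∧
      (α = 1 / 3 → ∀ t ∈ Set.Ico 0 T,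
        Real.exp (-(∫ s in Set.Ico (0:ℝ) T, B s) - C * T) ≤ J t) :=
  stmt10_general α hα1 T B hBcont hBnn hBint C hC J J' hpos hJ0 hderiv hineq
end

section
/- Let 0 < α < 1. Then the doubly-indexed family over (j,k) ∈ ℤ × ℤ with terms 2^j · 2^k · (4^j + 4^k)^{α/2} · (1 + 4^j + 4^k)^{−3/2} is summable; i.e., ∑_{(j,k)∈ℤ²} 2^{j+k} (4^j + 4^k)^{α/2} (1 + 4^j + 4^k)^{−3/2} < ∞. -/
open Real

private lemma fsummable (c : ℝ) (hc : c < -1/2) :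
    Summable (fun j : ℤ => (2:ℝ) ^ j * (1 + (4:ℝ) ^ j) ^ c) := by
  have hc0 : c ≤ 0 := by linarith
  apply Summable.of_nat_of_neg
  · -- bound by r^n with r = 2 * 4^c < 1
    have hr1 : (2:ℝ) * (4:ℝ) ^ c < 1 := by
      have h4 : (4:ℝ) ^ c < (4:ℝ) ^ (-(1:ℝ)/2) :=
        Real.rpow_lt_rpow_of_exponent_lt (by norm_num) (by linarith)
      have : (4:ℝ) ^ (-(1:ℝ)/2) = 1/2 := by
        rw [show (4:ℝ) = (2:ℝ)^(2:ℕ) by norm_num, ← Real.rpow_natCast (2:ℝ) 2,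
          ← Real.rpow_mul (by norm_num)]
        norm_num
      nlinarith
    have hr0 : (0:ℝ) ≤ 2 * (4:ℝ) ^ c := by positivity
    apply Summable.of_nonneg_of_le (fun n => by positivity)
      (fun n => ?_) (summable_geometric_of_lt_one hr0 hr1)
    have h1 : ((1:ℝ) + (4:ℝ) ^ (n:ℤ)) ^ c ≤ ((4:ℝ) ^ (n:ℤ)) ^ c := by
      apply Real.rpow_le_rpow_of_nonpos (by positivity) (by linarith [le_refl ((4:ℝ)^(n:ℤ))]) hc0
    calc (2:ℝ) ^ (n:ℤ) * (1 + (4:ℝ) ^ (n:ℤ)) ^ c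
        ≤ (2:ℝ) ^ (n:ℤ) * ((4:ℝ) ^ (n:ℤ)) ^ c := by
          apply mul_le_mul_of_nonneg_left h1 (by positivity)
      _ = (2 * (4:ℝ) ^ c) ^ n := by
          rw [zpow_natCast, zpow_natCast, mul_pow, ← Real.rpow_natCast ((4:ℝ)^c) n,
            ← Real.rpow_mul (by norm_num), mul_comm c (n:ℝ), Real.rpow_mul (by norm_num),
            Real.rpow_natCast]
  · apply Summable.of_nonneg_of_le (fun n => by positivity) (fun n => ?_)
      (summable_geometric_of_lt_one (by norm_num : (0:ℝ) ≤ 1/2) (by norm_num))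
    have h1 : ((1:ℝ) + (4:ℝ) ^ (-(n:ℤ))) ^ c ≤ 1 := by
      have hp := zpow_pos (show (0:ℝ) < 4 by norm_num) (-(n:ℤ))
      exact Real.rpow_le_one_of_one_le_of_nonpos (by linarith) hc0
    calc (2:ℝ) ^ (-(n:ℤ)) * (1 + (4:ℝ) ^ (-(n:ℤ))) ^ c
        ≤ (2:ℝ) ^ (-(n:ℤ)) * 1 := by
          apply mul_le_mul_of_nonneg_left h1 (by positivity)
      _ = (1/2:ℝ) ^ n := by
          rw [mul_one, zpow_neg, zpow_natCast, one_div, inv_pow]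

theorem stmt11 (α : ℝ) (hα0 : 0 < α) (hα1 : α < 1) :
    Summable (fun jk : ℤ × ℤ =>
      (2:ℝ) ^ jk.1 * (2:ℝ) ^ jk.2 * ((4:ℝ) ^ jk.1 + (4:ℝ) ^ jk.2) ^ (α / 2) *
        (1 + (4:ℝ) ^ jk.1 + (4:ℝ) ^ jk.2) ^ (-(3:ℝ) / 2)) := by
  set c : ℝ := (α - 3) / 4 with hc
  have hclt : c < -1/2 := by rw [hc]; linarith
  have hc0 : c ≤ 0 := by linarith
  have hf := fsummable c hclt
  have hmaj := hf.mul_of_nonneg hf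
    (fun j => by positivity) (fun k => by positivity)
  apply Summable.of_nonneg_of_le (fun jk => by positivity) (fun jk => ?_) hmaj
  obtain ⟨j, k⟩ := jk
  simp only
  set a : ℝ := (4:ℝ) ^ j with ha'
  set b : ℝ := (4:ℝ) ^ k with hb'
  have ha : (0:ℝ) < a := by positivity
  have hb : (0:ℝ) < b := by positivity
  have hab : (0:ℝ) < 1 + a + b := by linarith
  have step1 : (a + b) ^ (α/2) ≤ (1 + a + b) ^ (α/2) :=
    Real.rpow_le_rpow (by linarith) (by linarith) (by linarith)
  have step2 : (1 + a + b) ^ (α/2) * (1 + a + b) ^ (-(3:ℝ)/2) = (1 + a + b) ^ ((α-3)/2) := by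
    rw [← Real.rpow_add hab]; ring_nf
  have step3 : (1 + a + b) ^ ((α-3)/2) ≤ ((1+a) * (1+b)) ^ c := by
    have hsq : (1+a) * (1+b) ≤ (1 + a + b) ^ (2:ℝ) := by
      rw [show ((2:ℝ)) = ((2:ℕ):ℝ) by norm_num, Real.rpow_natCast]
      nlinarith
    have key : ((1 + a + b) ^ (2:ℝ)) ^ c = (1 + a + b) ^ ((α-3)/2) := by
      rw [← Real.rpow_mul hab.le]
      congr 1
      rw [hc]; ring
    rw [← key]
    exact Real.rpow_le_rpow_of_nonpos (by positivity) hsq hc0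
  have step4 : ((1+a) * (1+b)) ^ c = (1+a)^c * (1+b)^c :=
    Real.mul_rpow (by positivity) (by positivity)
  have hfin : (a + b) ^ (α/2) * (1 + a + b) ^ (-(3:ℝ)/2) ≤ (1+a)^c * (1+b)^c := by
    calc (a + b) ^ (α/2) * (1 + a + b) ^ (-(3:ℝ)/2)
        ≤ (1 + a + b) ^ (α/2) * (1 + a + b) ^ (-(3:ℝ)/2) := by
          apply mul_le_mul_of_nonneg_right step1 (by positivity)
      _ = (1 + a + b) ^ ((α-3)/2) := step2
      _ ≤ ((1+a) * (1+b)) ^ c := step3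
      _ = (1+a)^c * (1+b)^c := step4
  have h2j : (0:ℝ) < (2:ℝ)^j := by positivity
  have h2k : (0:ℝ) < (2:ℝ)^k := by positivity
  calc (2:ℝ) ^ j * (2:ℝ) ^ k * (a + b) ^ (α / 2) * (1 + a + b) ^ (-(3:ℝ) / 2)
      = (2:ℝ)^j * (2:ℝ)^k * ((a + b) ^ (α/2) * (1 + a + b) ^ (-(3:ℝ)/2)) := by ring
    _ ≤ (2:ℝ)^j * (2:ℝ)^k * ((1+a)^c * (1+b)^c) := by
        apply mul_le_mul_of_nonneg_left hfin (by positivity)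
    _ = ((2:ℝ)^j * (1+a)^c) * ((2:ℝ)^k * (1+b)^c) := by ring
end
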